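/- arXiv:0804.4447 — 5 statements merged into one kernel-verified Lean document; each statement's English description precedes it below -/
import Mathlib

section
/- If the cyclic submodule Rξ ⊆ R² is maximally isotropic (i.e., isotropic, and any η with σ̂(ξ,η)=0 lies in Rξ), then the components ξ₊ and ξ₋ are coprime in R. -/
/- For a common divisor `d` write `ξ = d • x`. The form is conjugate-linear in the first slot and linear in the second, so
isotropy of `ξ` gives `d* d σ̂(x, x) = 0`, hence `σ̂(ξ, x) = d* σ̂(x, x) = 0`. Maximality then puts
`x = f • ξ = (f d) • x`, and `x ≠ 0` forces `f d = 1`. -/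

open LaurentPolynomial

/-- The `R`-valued symplectic form `σ̂(ξ,η) = ξ₊* η₋ − ξ₋* η₊` on `R²`,
where `f* = invert f` is the involution `u ↦ u⁻¹`. -/
noncomputable def sig {p : ℕ} (ξ η : LaurentPolynomial (ZMod p) × LaurentPolynomial (ZMod p)) :
    LaurentPolynomial (ZMod p) :=
  invert ξ.1 * η.2 - invert ξ.2 * η.1

section

variable {p : ℕ}

local notation "R" => LaurentPolynomial (ZMod p)

theorem sig_smul_left (c : R) (x y : R × R) : sig (c • x) y = invert c * sig x y := by
  simp only [sig, Prod.smul_fst, Prod.smul_snd, smul_eq_mul, map_mul]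
  ring

theorem sig_smul_right (c : R) (x y : R × R) : sig x (c • y) = c * sig x y := by
  simp only [sig, Prod.smul_fst, Prod.smul_snd, smul_eq_mul]
  ring

theorem ne_zero_of_orthogonal_le_span [Fact (1 < p)] {ξ : R × R}
    (hmax : ∀ η : R × R, sig ξ η = 0 → ∃ f : R, η = (f * ξ.1, f * ξ.2)) : ξ ≠ 0 := by
  rintro rfl
  obtain ⟨f, hf⟩ := hmax (1, 0) (by simp [sig])
  exact one_ne_zero (by simpa using congrArg Prod.fst hf : (1 : R) = 0)

theorem sig_smul_self_eq_zero_iff [Fact p.Prime] {d : R} (hd : d ≠ 0) (x : R × R) :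
    sig (d • x) (d • x) = 0 ↔ sig x x = 0 := by
  rw [sig_smul_left, sig_smul_right, ← mul_assoc,
    mul_eq_zero_iff_left (mul_ne_zero (EmbeddingLike.map_ne_zero_iff.mpr hd) hd)]

end

/-- If `Rξ` is maximally isotropic, then `ξ₊` and `ξ₋` are coprime:
every common divisor is a unit. -/
theorem max_isotropic_coprime (p : ℕ) [Fact p.Prime]
    (ξ : LaurentPolynomial (ZMod p) × LaurentPolynomial (ZMod p))
    (hiso : sig ξ ξ = 0)
    (hmax : ∀ η : LaurentPolynomial (ZMod p) × LaurentPolynomial (ZMod p),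
      sig ξ η = 0 → ∃ f : LaurentPolynomial (ZMod p), η = (f * ξ.1, f * ξ.2)) :
    ∀ d : LaurentPolynomial (ZMod p), d ∣ ξ.1 → d ∣ ξ.2 → IsUnit d := by
  rintro d ⟨a, ha⟩ ⟨b, hb⟩
  set x := (a, b)
  have hξ : ξ = d • x := Prod.ext ha hb
  have hξ0 := ne_zero_of_orthogonal_le_span hmax
  have hd0 : d ≠ 0 := by rintro rfl; simp [hξ] at hξ0
  have hx0 : x ≠ 0 := by rintro hx; simp [hξ, hx] at hξ0
  have hx : sig x x = 0 := (sig_smul_self_eq_zero_iff hd0 x).mp (hξ ▸ hiso)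
  obtain ⟨f, hf⟩ := hmax x (by rw [hξ, sig_smul_left, hx, mul_zero])
  have hfd : (f * d) • x = (1 : LaurentPolynomial (ZMod p)) • x := by
    rw [one_smul, mul_smul, ← hξ]
    exact hf.symm
  exact .of_mul_eq_one f (by rw [mul_comm]; exact smul_left_injective _ hx0 hfd)
end

section
/- If the cyclic submodule Rξ ⊆ R² is maximally isotropic, then ξ is reflection invariant: there exists a ∈ ½ℤ with ξ = u^{2a}·ξ*, i.e., ξ* = u^n ξ for some integer n. -/
/-!
The vector `ξ* = (ξ₊*, ξ₋*)` is always orthogonal to `ξ`, so maximality gives `ξ* = f ξ`; applying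
the involution once more shows `f f* = 1`, hence `f = c uⁿ` with `c² = 1`. If `c = -1 ≠ 1`, then
evaluating `ξ* = -uⁿ ξ` at `u = 1` shows that `u - 1` divides both coordinates of `ξ`. But an
isotropic `ξ` generating a maximal isotropic submodule is primitive: `ξ / d` is still orthogonal
to `ξ`, so it lies in `Rξ`, which forces `d` to be a unit, and `u - 1` is not one.
-/

open LaurentPolynomial

namespace LaurentPolynomial

section CommRing

variable {R : Type*} [CommRing R]

lemma eval₂_one_invert (f : R[T;T⁻¹]) :
    eval₂ (RingHom.id R) 1 (invert f) = eval₂ (RingHom.id R) 1 f := by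
  induction f using LaurentPolynomial.induction_on' with
  | add p q hp hq => simp only [map_add, hp, hq]
  | C_mul_T n a => simp

lemma T_one_sub_one_dvd_of_eval₂_one_eq_zero {f : R[T;T⁻¹]}
    (hf : eval₂ (RingHom.id R) 1 f = 0) : T 1 - 1 ∣ f := by
  obtain ⟨n, P, hP⟩ := f.exists_T_pow
  have hroot : P.IsRoot 1 := by
    simpa using (show eval₂ (RingHom.id R) 1 (Polynomial.toLaurent P) = 0 by
      rw [hP, map_mul, hf, zero_mul])
  rw [← (isUnit_T n).dvd_mul_right, ← hP]
  obtain ⟨Q, rfl⟩ := Polynomial.dvd_iff_isRoot.mpr hroot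
  exact ⟨Polynomial.toLaurent Q, by simp [Polynomial.toLaurent_X]⟩

lemma not_isUnit_T_one_sub_one [Nontrivial R] : ¬ IsUnit (T 1 - 1 : R[T;T⁻¹]) := fun h => by
  simpa using h.map (eval₂ (RingHom.id R) 1)

lemma eval₂_one_eq_zero_of_invert_eq_neg_T_mul [IsDomain R] (h2 : (2 : R) ≠ 0)
    {f : R[T;T⁻¹]} {n : ℤ} (hf : invert f = C (-1) * T n * f) :
    eval₂ (RingHom.id R) 1 f = 0 := by
  have h : eval₂ (RingHom.id R) 1 f = -eval₂ (RingHom.id R) 1 f := by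
    simpa [eval₂_one_invert] using congrArg (eval₂ (RingHom.id R) 1) hf
  rw [eq_neg_iff_add_eq_zero, ← two_mul] at h
  exact (mul_eq_zero.mp h).resolve_left h2

lemma exists_eq_C_mul_T_of_isUnit [IsDomain R] {f : R[T;T⁻¹]} (hf : IsUnit f) :
    ∃ (c : R) (n : ℤ), f = C c * T n := by
  obtain ⟨g, hfg⟩ := hf.exists_right_inv
  obtain ⟨m, P, hP⟩ := f.exists_T_pow
  obtain ⟨k, Q, hQ⟩ := g.exists_T_pow
  have hPQ : P * Q = Polynomial.X ^ (m + k) := by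
    apply Polynomial.toLaurent_injective
    rw [map_mul, hP, hQ, Polynomial.toLaurent_X_pow]
    calc f * T m * (g * T k) = f * g * (T m * T k) := by ring
      _ = T (m + k : ℕ) := by rw [hfg, one_mul, ← T_add]; norm_cast
  obtain ⟨i, -, hPX⟩ := (dvd_prime_pow Polynomial.prime_X (m + k)).mp (Dvd.intro Q hPQ)
  obtain ⟨u, hu⟩ := hPX.symm
  obtain ⟨c, -, hc⟩ := Polynomial.isUnit_iff.mp u.isUnit
  refine ⟨c, i - m, ?_⟩
  calc f = Polynomial.toLaurent P * T (-m) := by rw [hP, mul_T_assoc]; simp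
    _ = C c * T (i - m) := by
      rw [← hu, ← hc, map_mul, Polynomial.toLaurent_X_pow, Polynomial.toLaurent_C,
        mul_comm (T (i : ℤ)), mul_T_assoc, sub_eq_add_neg]

end CommRing

section Isotropic

variable {R : Type*} [CommRing R] [IsDomain R] {ξ : R[T;T⁻¹] × R[T;T⁻¹]}

lemma mul_invert_eq_one_of_invert_eq_smul (hξ : ξ ≠ 0) {f : R[T;T⁻¹]}
    (hf : (invert ξ.1, invert ξ.2) = f • ξ) : f * invert f = 1 := by
  have hf1 : invert ξ.1 = f * ξ.1 := congrArg Prod.fst hf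
  have hf2 : invert ξ.2 = f * ξ.2 := congrArg Prod.snd hf
  have hinv (x : R[T;T⁻¹]) (hx : invert x = f * x) : (f * invert f) * x = x := by
    conv_rhs => rw [← involutive_invert x, hx, map_mul, hx]
    ring
  refine smul_left_injective _ hξ (?_ : (f * invert f) • ξ = (1 : R[T;T⁻¹]) • ξ)
  rw [one_smul]
  exact Prod.ext (hinv _ hf1) (hinv _ hf2)

lemma isUnit_of_dvd_of_isotropic_of_maximal
    (hiso : invert ξ.1 * ξ.2 - invert ξ.2 * ξ.1 = 0)
    (hmax : ∀ η : R[T;T⁻¹] × R[T;T⁻¹],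
      invert ξ.1 * η.2 - invert ξ.2 * η.1 = 0 → ∃ f : R[T;T⁻¹], η = f • ξ)
    (hξ : ξ ≠ 0) {d : R[T;T⁻¹]} (h1 : d ∣ ξ.1) (h2 : d ∣ ξ.2) : IsUnit d := by
  obtain ⟨a, ha⟩ := h1
  obtain ⟨b, hb⟩ := h2
  have hξd : ξ = d • (a, b) := Prod.ext ha hb
  have hd : d ≠ 0 := by rintro rfl; exact hξ (by simpa using hξd)
  obtain ⟨g, hg⟩ := hmax (a, b) <| mul_left_cancel₀ hd <| by
    linear_combination (invert ξ.2) * ha - (invert ξ.1) * hb + hiso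
  refine IsUnit.of_mul_eq_one g (smul_left_injective _ hξ ?_)
  change (d * g) • ξ = (1 : R[T;T⁻¹]) • ξ
  rw [mul_smul, ← hg, ← hξd, one_smul]

theorem exists_invert_eq_T_mul_of_isotropic_of_maximal
    (hiso : invert ξ.1 * ξ.2 - invert ξ.2 * ξ.1 = 0)
    (hmax : ∀ η : R[T;T⁻¹] × R[T;T⁻¹],
      invert ξ.1 * η.2 - invert ξ.2 * η.1 = 0 → ∃ f : R[T;T⁻¹], η = f • ξ) :
    ∃ n : ℤ, invert ξ.1 = T n * ξ.1 ∧ invert ξ.2 = T n * ξ.2 := by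
  rcases eq_or_ne ξ 0 with rfl | hξ
  · exact ⟨0, by simp⟩
  obtain ⟨f, hf⟩ := hmax (invert ξ.1, invert ξ.2) (sub_eq_zero.mpr (mul_comm _ _))
  have hunit := mul_invert_eq_one_of_invert_eq_smul hξ hf
  have hf1 : invert ξ.1 = f * ξ.1 := congrArg Prod.fst hf
  have hf2 : invert ξ.2 = f * ξ.2 := congrArg Prod.snd hf
  obtain ⟨c, n, rfl⟩ := exists_eq_C_mul_T_of_isUnit (IsUnit.of_mul_eq_one _ hunit)
  have hc : c * c = 1 := by simpa using congrArg (eval₂ (RingHom.id R) 1) hunit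
  have hc' : c = 1 ∨ (c = -1 ∧ (2 : R) ≠ 0) := by
    rcases mul_self_eq_one_iff.mp hc with rfl | rfl
    · exact .inl rfl
    · by_cases h2 : (2 : R) = 0
      · exact .inl (by linear_combination -h2)
      · exact .inr ⟨rfl, h2⟩
  rcases hc' with rfl | ⟨rfl, h2⟩
  · exact ⟨n, by simpa using hf1, by simpa using hf2⟩
  · have hdvd {x : R[T;T⁻¹]} (hx : invert x = C (-1) * T n * x) : T 1 - 1 ∣ x :=
      T_one_sub_one_dvd_of_eval₂_one_eq_zero (eval₂_one_eq_zero_of_invert_eq_neg_T_mul h2 hx)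
    exact absurd (isUnit_of_dvd_of_isotropic_of_maximal hiso hmax hξ (hdvd hf1) (hdvd hf2))
      not_isUnit_T_one_sub_one

end Isotropic

end LaurentPolynomial

/-- If `Rξ` is maximally isotropic, then `ξ` is reflection invariant:
`ξ* = uⁿ ξ` for some integer `n`. -/
theorem max_isotropic_reflection_invariant (p : ℕ) [Fact p.Prime]
    (ξ : LaurentPolynomial (ZMod p) × LaurentPolynomial (ZMod p))
    (hiso : sig ξ ξ = 0)
    (hmax : ∀ η : LaurentPolynomial (ZMod p) × LaurentPolynomial (ZMod p),
      sig ξ η = 0 → ∃ f : LaurentPolynomial (ZMod p), η = (f * ξ.1, f * ξ.2)) :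
    ∃ n : ℤ, invert ξ.1 = T n * ξ.1 ∧ invert ξ.2 = T n * ξ.2 :=
  exists_invert_eq_T_mul_of_isotropic_of_maximal hiso hmax
end

section
/- Conversely: if a 2×2 matrix t over R = F_p[u,u^{-1}] has all entries reflection invariant with respect to a lattice point a ∈ ℤ (entry f satisfies f = u^{2a} f*) and det(t) = u^{2a}, then t preserves the symplectic form σ̂. -/
/-! Expanding `σ̂(tξ, tη)` bilinearly reduces the claim to `σ̂` on the columns of `t`: it
suffices that they are isotropic with `σ̂(col₁, col₂) = 1`. Reflection invariance turns `f*` into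
`u^{-2a} f` on every entry, so `σ̂(col₁, col₁)`, `σ̂(col₂, col₂)` vanish and
`σ̂(col₁, col₂) = u^{-2a} det t = 1`. -/

open LaurentPolynomial

/-- Action of a 2×2 matrix over `R` on a phase space vector in `R²`. -/
noncomputable def app {p : ℕ} (t : Matrix (Fin 2) (Fin 2) (LaurentPolynomial (ZMod p)))
    (ξ : LaurentPolynomial (ZMod p) × LaurentPolynomial (ZMod p)) :
    LaurentPolynomial (ZMod p) × LaurentPolynomial (ZMod p) :=
  (t 0 0 * ξ.1 + t 0 1 * ξ.2, t 1 0 * ξ.1 + t 1 1 * ξ.2)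

/-- First column of a 2×2 matrix, as a phase space vector. -/
def col1 {p : ℕ} (t : Matrix (Fin 2) (Fin 2) (LaurentPolynomial (ZMod p))) :
    LaurentPolynomial (ZMod p) × LaurentPolynomial (ZMod p) := (t 0 0, t 1 0)

/-- Second column of a 2×2 matrix, as a phase space vector. -/
def col2 {p : ℕ} (t : Matrix (Fin 2) (Fin 2) (LaurentPolynomial (ZMod p))) :
    LaurentPolynomial (ZMod p) × LaurentPolynomial (ZMod p) := (t 0 1, t 1 1)

theorem LaurentPolynomial.invert_invert {R : Type*} [CommSemiring R] (f : R[T;T⁻¹]) :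
    invert (invert f) = f :=
  invert.apply_symm_apply f

theorem LaurentPolynomial.invert_eq_T_neg_mul_of_eq_T_mul_invert {R : Type*} [CommSemiring R]
    {f : R[T;T⁻¹]} {n : ℤ} (h : f = T n * invert f) : invert f = T (-n) * f := by
  conv_lhs => rw [h]
  rw [map_mul, invert_T, invert_invert]

section Symplectic

variable {p : ℕ}

theorem sig_swap (ξ η : LaurentPolynomial (ZMod p) × LaurentPolynomial (ZMod p)) :
    sig η ξ = -invert (sig ξ η) := by
  simp only [sig, map_sub, map_mul, invert_invert]
  ring

theorem sig_app_eq (t : Matrix (Fin 2) (Fin 2) (LaurentPolynomial (ZMod p)))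
    (ξ η : LaurentPolynomial (ZMod p) × LaurentPolynomial (ZMod p)) :
    sig (app t ξ) (app t η) =
      invert ξ.1 * η.1 * sig (col1 t) (col1 t) + invert ξ.1 * η.2 * sig (col1 t) (col2 t) +
        invert ξ.2 * η.1 * sig (col2 t) (col1 t) + invert ξ.2 * η.2 * sig (col2 t) (col2 t) := by
  simp only [sig, app, col1, col2, map_add, map_mul]
  ring

theorem app_preserves_sig_of_sig_cols (t : Matrix (Fin 2) (Fin 2) (LaurentPolynomial (ZMod p)))
    (h11 : sig (col1 t) (col1 t) = 0) (h12 : sig (col1 t) (col2 t) = 1)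
    (h22 : sig (col2 t) (col2 t) = 0)
    (ξ η : LaurentPolynomial (ZMod p) × LaurentPolynomial (ZMod p)) :
    sig (app t ξ) (app t η) = sig ξ η := by
  rw [sig_app_eq, sig_swap (col1 t) (col2 t), h11, h12, h22, map_one, sig]
  ring

theorem sig_eq_T_neg_mul_of_invert_eq
    {ξ η : LaurentPolynomial (ZMod p) × LaurentPolynomial (ZMod p)}
    {n : ℤ} (h1 : invert ξ.1 = T (-n) * ξ.1) (h2 : invert ξ.2 = T (-n) * ξ.2) :
    sig ξ η = T (-n) * (ξ.1 * η.2 - ξ.2 * η.1) := by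
  rw [sig, h1, h2]
  ring

theorem sig_self_eq_zero_of_invert_eq
    {ξ : LaurentPolynomial (ZMod p) × LaurentPolynomial (ZMod p)}
    {n : ℤ} (h1 : invert ξ.1 = T (-n) * ξ.1) (h2 : invert ξ.2 = T (-n) * ξ.2) :
    sig ξ ξ = 0 := by
  rw [sig_eq_T_neg_mul_of_invert_eq h1 h2, mul_comm ξ.1, sub_self, mul_zero]

end Symplectic

theorem reflection_and_det_symplectic_general (p : ℕ)
    (t : Matrix (Fin 2) (Fin 2) (LaurentPolynomial (ZMod p))) (a : ℤ)
    (hrefl : ∀ i j, t i j = T (2 * a) * invert (t i j))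
    (hdet : t.det = T (2 * a)) :
    ∀ ξ η : LaurentPolynomial (ZMod p) × LaurentPolynomial (ZMod p),
      sig (app t ξ) (app t η) = sig ξ η := by
  have hinv (i j : Fin 2) : invert (t i j) = T (-(2 * a)) * t i j :=
    invert_eq_T_neg_mul_of_eq_T_mul_invert (hrefl i j)
  apply app_preserves_sig_of_sig_cols
  · exact sig_self_eq_zero_of_invert_eq (ξ := col1 t) (hinv 0 0) (hinv 1 0)
  · rw [sig_eq_T_neg_mul_of_invert_eq (ξ := col1 t) (hinv 0 0) (hinv 1 0), col1, col2,
      mul_comm (t 1 0), ← Matrix.det_fin_two, hdet, ← T_add, neg_add_cancel, T_zero]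
  · exact sig_self_eq_zero_of_invert_eq (ξ := col2 t) (hinv 0 1) (hinv 1 1)

/-- Conversely, if all entries of a 2×2 matrix `t` over `R` are reflection invariant
with respect to a lattice point `a ∈ ℤ` and `det t = u^{2a}`, then `t` preserves
the symplectic form `σ̂`. -/
theorem reflection_and_det_symplectic (p : ℕ) [Fact p.Prime]
    (t : Matrix (Fin 2) (Fin 2) (LaurentPolynomial (ZMod p))) (a : ℤ)
    (hrefl : ∀ i j, t i j = T (2 * a) * invert (t i j))
    (hdet : t.det = T (2 * a)) :
    ∀ ξ η : LaurentPolynomial (ZMod p) × LaurentPolynomial (ZMod p),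
      sig (app t ξ) (app t η) = sig ξ η :=
  reflection_and_det_symplectic_general p t a hrefl hdet
end

section
/- Every cyclic isotropic submodule Rξ ⊆ R² (with ξ ≠ 0) embeds in a cyclic maximally isotropic submodule: there exists η ∈ R² with Rξ ⊆ Rη and Rη maximally isotropic. -/
/-!
Since `R = 𝔽_p[u, u⁻¹]` is a localization of `𝔽_p[u]`, it is a principal ideal domain, so a
nonzero `ξ` factors as `ξ = d • η` with `d ≠ 0` and the coordinates of `η` coprime.  Cancelling
`d* d` shows that `η` is again isotropic.  If `σ̂(η, λ) = 0`, then `λ` and `η` are both orthogonal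
to the nonzero vector `η`, so `det(η, λ) = 0`; with a Bézout relation `a η₊ + b η₋ = 1` this gives
`λ = (a λ₊ + b λ₋) • η`.
-/

open LaurentPolynomial

theorem IsLocalization.isPrincipalIdealRing {R : Type*} [CommSemiring R] [IsPrincipalIdealRing R]
    (M : Submonoid R) (S : Type*) [CommSemiring S] [Algebra R S] [IsLocalization M S] :
    IsPrincipalIdealRing S where
  principal J := by
    rw [← IsLocalization.map_under M S J, ← Ideal.span_singleton_generator (J.under R),
      Ideal.map_span, Set.image_singleton]
    exact ⟨_, rfl⟩

instance LaurentPolynomial.isPrincipalIdealRing {K : Type*} [Field K] :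
    IsPrincipalIdealRing K[T;T⁻¹] :=
  IsLocalization.isPrincipalIdealRing (Submonoid.powers (Polynomial.X : Polynomial K)) _

theorem IsBezout.exists_eq_mul_isCoprime {R : Type*} [CommRing R] [IsLeftCancelMulZero R] [IsBezout R]
    {v : R × R} (hv : v ≠ 0) :
    ∃ d : R, ∃ e : R × R, d ≠ 0 ∧ v = (d * e.1, d * e.2) ∧ IsCoprime e.1 e.2 := by
  obtain ⟨e₁, h₁⟩ := IsBezout.gcd_dvd_left v.1 v.2
  obtain ⟨e₂, h₂⟩ := IsBezout.gcd_dvd_right v.1 v.2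
  obtain ⟨a, b, hab⟩ := IsBezout.gcd_eq_sum v.1 v.2
  have hd : IsBezout.gcd v.1 v.2 ≠ 0 := by
    intro h0
    exact hv (Prod.ext (by rw [h₁, h0, zero_mul]; rfl) (by rw [h₂, h0, zero_mul]; rfl))
  refine ⟨_, (e₁, e₂), hd, Prod.ext h₁ h₂, a, b, mul_left_cancel₀ hd ?_⟩
  linear_combination hab - a * h₁ - b * h₂

theorem IsCoprime.exists_eq_mul_of_mul_eq_mul {R : Type*} [CommRing R] {e w : R × R}
    (hcop : IsCoprime e.1 e.2) (h : e.1 * w.2 = e.2 * w.1) :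
    ∃ g : R, w = (g * e.1, g * e.2) := by
  obtain ⟨a, b, hab⟩ := hcop
  exact ⟨a * w.1 + b * w.2, Prod.ext (by linear_combination -b * h - w.1 * hab)
    (by linear_combination a * h - w.2 * hab)⟩

/-- `e` and `w` are both orthogonal to the nonzero vector `e`, so in rank two they are parallel. -/
theorem mul_eq_mul_of_form_eq_zero {R F : Type*} [CommRing R] [NoZeroDivisors R] [FunLike F R R]
    [EmbeddingLike F R R] [ZeroHomClass F R R] {σ : F} {e w : R × R} (he : e ≠ 0)
    (hiso : σ e.1 * e.2 - σ e.2 * e.1 = 0) (h : σ e.1 * w.2 - σ e.2 * w.1 = 0) :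
    e.1 * w.2 = e.2 * w.1 := by
  have h₁ : σ e.1 * (e.1 * w.2 - e.2 * w.1) = 0 := by linear_combination e.1 * h - w.1 * hiso
  have h₂ : σ e.2 * (e.1 * w.2 - e.2 * w.1) = 0 := by linear_combination e.2 * h - w.2 * hiso
  by_contra hne
  have hσ₁ : σ e.1 = 0 := (mul_eq_zero.mp h₁).resolve_right (sub_ne_zero.mpr hne)
  have hσ₂ : σ e.2 = 0 := (mul_eq_zero.mp h₂).resolve_right (sub_ne_zero.mpr hne)
  rw [EmbeddingLike.map_eq_zero_iff] at hσ₁ hσ₂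
  exact he (Prod.ext hσ₁ hσ₂)

theorem sig_mul_mul {p : ℕ} (f g : LaurentPolynomial (ZMod p))
    (e w : LaurentPolynomial (ZMod p) × LaurentPolynomial (ZMod p)) :
    sig (f * e.1, f * e.2) (g * w.1, g * w.2) = invert f * g * sig e w := by
  simp only [sig, map_mul]
  ring

/-- Every nonzero cyclic isotropic submodule `Rξ ⊆ R²` embeds into a cyclic
maximally isotropic submodule `Rη`. -/
theorem isotropic_embeds_max_isotropic (p : ℕ) [Fact p.Prime]
    (ξ : LaurentPolynomial (ZMod p) × LaurentPolynomial (ZMod p))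
    (hne : ξ ≠ 0) (hiso : sig ξ ξ = 0) :
    ∃ η : LaurentPolynomial (ZMod p) × LaurentPolynomial (ZMod p),
      (∃ f : LaurentPolynomial (ZMod p), ξ = (f * η.1, f * η.2)) ∧
      sig η η = 0 ∧
      (∀ lam : LaurentPolynomial (ZMod p) × LaurentPolynomial (ZMod p),
        sig η lam = 0 → ∃ g : LaurentPolynomial (ZMod p), lam = (g * η.1, g * η.2)) := by
  obtain ⟨d, η, hd, hξ, hcop⟩ := IsBezout.exists_eq_mul_isCoprime hne
  have hη : η ≠ 0 := by
    rintro rfl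
    exact hne (hξ.trans (by simp))
  have hisoη : sig η η = 0 := by
    rw [hξ, sig_mul_mul] at hiso
    simpa [hd] using hiso
  refine ⟨η, ⟨d, hξ⟩, hisoη, fun lam hlam => hcop.exists_eq_mul_of_mul_eq_mul ?_⟩
  exact mul_eq_mul_of_form_eq_zero hη hisoη hlam
end

section
/- Let p be prime and let t be a 2×2 matrix over R = F_p[u,u^{-1}] preserving the symplectic form σ̂ with det(t) = 1 (a centered symplectic cellular automaton). Then t is a finite product of shear matrices G(f) = [[1,0],[f,1]] with f reflection invariant (f = f*) and local Fourier matrices F(c) = [[0,−c^{-1}],[c,0]] with c ∈ F_p \ {0}. -/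
open LaurentPolynomial

/-- Shear matrix `G(f) = [[1,0],[f,1]]`. -/
noncomputable def G {p : ℕ} (f : LaurentPolynomial (ZMod p)) :
    Matrix (Fin 2) (Fin 2) (LaurentPolynomial (ZMod p)) := !![1, 0; f, 1]

/-- Local Fourier transform `F(c) = [[0, −c⁻¹],[c, 0]]` for `c ∈ F_p \ {0}`. -/
noncomputable def Fou {p : ℕ} [Fact p.Prime] (c : ZMod p) :
    Matrix (Fin 2) (Fin 2) (LaurentPolynomial (ZMod p)) := !![0, C (-c⁻¹); C c, 0]

/-! The entries of a centered automaton are reflection invariant: with `J` the Gram matrix of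
`σ̂`, invariance says `(t*)ᵀ J t = J`, and `det t = 1` gives `J t⁻¹ J⁻¹ = tᵀ`, so `t* = t`.
Invariant Laurent polynomials admit division with remainder for the degree `max |k|` over the
support: the top coefficients at `±k` are cancelled together by an invariant binomial
`e (u^s + u^{-s})`. Upper shears `F(1) G(-f) F(-1)` then run Euclid's algorithm on the first
column of `t` until its lower-left entry vanishes. What remains is upper triangular with invariant
unit diagonal; the only invariant units are the nonzero constants `α`, so it is
`diag(α, α⁻¹) = F(-1) F(α)` times a shear. -/

namespace LaurentPolynomial

variable {K : Type*}

/-- For reflection-invariant `f`, the degree `max supp f - min supp f` is `2 * absDegree f`. -/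
noncomputable def absDegree [Semiring K] (f : K[T;T⁻¹]) : ℕ := f.coeff.support.sup Int.natAbs

section Semiring
variable [Semiring K] {f g : K[T;T⁻¹]} {m n : ℕ}

lemma coeff_eq_zero_of_absDegree_lt {k : ℤ} (h : f.absDegree < k.natAbs) : f.coeff k = 0 :=
  Finsupp.notMem_support_iff.1 fun hk => h.not_ge (Finset.le_sup (f := Int.natAbs) hk)

lemma absDegree_le_iff : f.absDegree ≤ n ↔ ∀ k : ℤ, n < k.natAbs → f.coeff k = 0 := by
  refine ⟨fun h k hk => coeff_eq_zero_of_absDegree_lt (h.trans_lt hk), fun h => ?_⟩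
  refine Finset.sup_le fun k hk => ?_
  by_contra! hlt
  exact Finsupp.mem_support_iff.1 hk (h k hlt)

lemma absDegree_mul_le : (f * g).absDegree ≤ f.absDegree + g.absDegree :=
  AddMonoidAlgebra.sup_support_coeff_mul_le Int.natAbs_add_le f g

lemma coeff_mul_add_of_absDegree_le (hf : f.absDegree ≤ m) (hg : g.absDegree ≤ n) :
    (f * g).coeff (m + n) = f.coeff m * g.coeff n := by
  refine AddMonoidAlgebra.coeff_mul_add_of_uniqueAdd fun a b ha hb hab => ?_
  have := (Finset.le_sup (f := Int.natAbs) ha).trans hf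
  have := (Finset.le_sup (f := Int.natAbs) hb).trans hg
  omega

lemma eq_C_of_absDegree_eq_zero (h : f.absDegree = 0) : f = C (f.coeff 0) := by
  ext k
  rcases eq_or_ne k 0 with rfl | hk
  · simp
  · rw [C_apply, if_neg hk, coeff_eq_zero_of_absDegree_lt (by omega)]

end Semiring

section CommSemiring
variable [CommSemiring K] {f : K[T;T⁻¹]}

lemma coeff_neg_of_invert_eq (hf : invert f = f) (k : ℤ) : f.coeff (-k) = f.coeff k := by
  rw [← invert_apply, hf]

lemma coeff_absDegree_ne_zero (hf : invert f = f) (h0 : f ≠ 0) : f.coeff f.absDegree ≠ 0 := by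
  obtain ⟨k, hk, hsup⟩ := Finset.exists_mem_eq_sup f.coeff.support
    (Finsupp.support_nonempty_iff.2 fun h => h0 (LaurentPolynomial.ext (by simp [h]))) Int.natAbs
  rw [absDegree, hsup]
  rcases Int.natAbs_eq k with hk' | hk'
  · rw [← hk']; exact Finsupp.mem_support_iff.1 hk
  · rw [← neg_eq_iff_eq_neg.2 hk', coeff_neg_of_invert_eq hf]; exact Finsupp.mem_support_iff.1 hk

lemma exists_invariant_coeff_eq (s : ℕ) (e : K) :
    ∃ q : K[T;T⁻¹], invert q = q ∧ q.absDegree ≤ s ∧ q.coeff s = e := by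
  rcases Nat.eq_zero_or_pos s with rfl | hs
  · refine ⟨C e, invert_C e, absDegree_le_iff.2 fun k hk => ?_, by simp⟩
    simp [show k ≠ 0 by omega]
  · refine ⟨C e * (T s + T (-s)), by simp [add_comm],
      absDegree_le_iff.2 fun k hk => ?_, ?_⟩ <;>
      simp only [mul_add, ← single_eq_C_mul_T, AddMonoidAlgebra.coeff_add, Finsupp.add_apply,
        AddMonoidAlgebra.coeff_single, Finsupp.single_apply]
    · rw [if_neg (by omega), if_neg (by omega), add_zero]
    · simp [hs.ne']

end CommSemiring

section Field
variable [Field K] {a c d : K[T;T⁻¹]}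

lemma exists_invariant_absDegree_sub_mul_lt (ha : invert a = a) (hc : invert c = c)
    (hc0 : c ≠ 0) (hca : c.absDegree ≤ a.absDegree) :
    ∃ q, invert q = q ∧ (a - q * c = 0 ∨ (a - q * c).absDegree < a.absDegree) := by
  set M := a.absDegree
  set n := c.absDegree
  obtain ⟨q, hq, hqs, hqe⟩ := exists_invariant_coeff_eq (M - n) (a.coeff M / c.coeff n)
  refine ⟨q, hq, or_iff_not_imp_left.2 fun hr0 => ?_⟩
  have hr : invert (a - q * c) = a - q * c := by rw [map_sub, map_mul, ha, hq, hc]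
  have hqc : (q * c).absDegree ≤ M := absDegree_mul_le.trans (by omega)
  have hle : (a - q * c).absDegree ≤ M := absDegree_le_iff.2 fun k hk => by
    rw [AddMonoidAlgebra.coeff_sub, Finsupp.sub_apply, coeff_eq_zero_of_absDegree_lt hk,
      coeff_eq_zero_of_absDegree_lt (hqc.trans_lt hk), sub_zero]
  have htop : (a - q * c).coeff M = 0 := by
    have := coeff_mul_add_of_absDegree_le hqs (le_refl n)
    rw [show ((M - n : ℕ) : ℤ) + n = M by omega, hqe,
      div_mul_cancel₀ _ (coeff_absDegree_ne_zero hc hc0)] at this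
    rw [AddMonoidAlgebra.coeff_sub, Finsupp.sub_apply, this, sub_self]
  refine hle.lt_of_ne fun h => coeff_absDegree_ne_zero hr hr0 ?_
  rwa [h]

theorem exists_invariant_mul_add (hc : invert c = c) (hc0 : c ≠ 0) (ha : invert a = a) :
    ∃ q r, invert q = q ∧ invert r = r ∧ a = q * c + r ∧
      (r = 0 ∨ r.absDegree < c.absDegree) := by
  induction hM : a.absDegree using Nat.strong_induction_on generalizing a with
  | _ M ih =>
  by_cases hsmall : a.absDegree < c.absDegree
  · exact ⟨0, a, map_zero _, ha, by simp, Or.inr hsmall⟩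
  obtain ⟨q, hq, hdrop⟩ := exists_invariant_absDegree_sub_mul_lt ha hc hc0 (not_lt.1 hsmall)
  have hrest : invert (a - q * c) = a - q * c := by rw [map_sub, map_mul, ha, hq, hc]
  rcases hdrop with hzero | hlt
  · exact ⟨q, 0, hq, map_zero _, by rw [add_zero, ← sub_eq_zero, hzero], Or.inl rfl⟩
  obtain ⟨q', r, hq', hr, heq, hrc⟩ := ih _ (hM ▸ hlt) hrest rfl
  exact ⟨q + q', r, by rw [map_add, hq, hq'], hr, by linear_combination heq, hrc⟩

lemma exists_eq_C_of_mul_eq_one (h : a * d = 1) (ha : invert a = a) (hd : invert d = d) :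
    ∃ α : K, α ≠ 0 ∧ a = C α ∧ d = C α⁻¹ := by
  have hone (k : ℤ) : (1 : K[T;T⁻¹]).coeff k = if k = 0 then 1 else 0 := by
    rw [← map_one C, C_apply]
  have ha0 : a ≠ 0 := left_ne_zero_of_mul_eq_one h
  have hd0 : d ≠ 0 := right_ne_zero_of_mul_eq_one h
  have htop := coeff_mul_add_of_absDegree_le (le_refl a.absDegree) (le_refl d.absDegree)
  rw [h, hone] at htop
  have hdeg : a.absDegree = 0 ∧ d.absDegree = 0 := by
    by_contra hne
    rw [if_neg (by omega)] at htop
    exact mul_ne_zero (coeff_absDegree_ne_zero ha ha0) (coeff_absDegree_ne_zero hd hd0) htop.symm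
  rw [eq_C_of_absDegree_eq_zero hdeg.1, eq_C_of_absDegree_eq_zero hdeg.2, ← map_mul,
    ← map_one C] at h
  have hprod : a.coeff 0 * d.coeff 0 = 1 := (C : K →+* K[T;T⁻¹]).injective h
  exact ⟨a.coeff 0, left_ne_zero_of_mul_eq_one hprod, eq_C_of_absDegree_eq_zero hdeg.1,
    by rw [eq_C_of_absDegree_eq_zero hdeg.2, eq_inv_of_mul_eq_one_right hprod]⟩

end Field

end LaurentPolynomial

section Generators

variable {p : ℕ} [Fact p.Prime]

def scaGenerators (p : ℕ) [Fact p.Prime] :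
    Set (Matrix (Fin 2) (Fin 2) (LaurentPolynomial (ZMod p))) :=
  {m | ∃ f : LaurentPolynomial (ZMod p), invert f = f ∧ m = G f} ∪
    {m | ∃ c : ZMod p, c ≠ 0 ∧ m = Fou c}

lemma G_mem_closure {f : LaurentPolynomial (ZMod p)} (hf : invert f = f) :
    G f ∈ Submonoid.closure (scaGenerators p) :=
  Submonoid.subset_closure (Or.inl ⟨f, hf, rfl⟩)

lemma Fou_mem_closure {c : ZMod p} (hc : c ≠ 0) : Fou c ∈ Submonoid.closure (scaGenerators p) :=
  Submonoid.subset_closure (Or.inr ⟨c, hc, rfl⟩)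

lemma diagonal_mem_closure {α : ZMod p} (hα : α ≠ 0) :
    !![C α, 0; 0, C α⁻¹] ∈ Submonoid.closure (scaGenerators p) := by
  have : !![C α, 0; 0, C α⁻¹] = Fou (-1) * Fou α := by
    simp [Fou]
  rw [this]
  exact mul_mem (Fou_mem_closure (neg_ne_zero.2 one_ne_zero)) (Fou_mem_closure hα)

lemma upperShear_mem_closure {f : LaurentPolynomial (ZMod p)} (hf : invert f = f) :
    !![1, f; 0, 1] ∈ Submonoid.closure (scaGenerators p) := by
  have : !![1, f; 0, 1] = Fou 1 * G (-f) * Fou (-1) := by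
    simp [Fou, G]
  rw [this]
  exact mul_mem (mul_mem (Fou_mem_closure one_ne_zero) (G_mem_closure (by rw [map_neg, hf])))
    (Fou_mem_closure (neg_ne_zero.2 one_ne_zero))

lemma upperTriangular_mem_closure {a b d : LaurentPolynomial (ZMod p)} (ha : invert a = a)
    (hb : invert b = b) (hd : invert d = d) (had : a * d = 1) :
    !![a, b; 0, d] ∈ Submonoid.closure (scaGenerators p) := by
  obtain ⟨α, hα, rfl, rfl⟩ := exists_eq_C_of_mul_eq_one had ha hd
  have : !![C α, b; 0, C α⁻¹] = !![C α, 0; 0, C α⁻¹] * !![1, C α⁻¹ * b; 0, 1] := by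
    simp [← mul_assoc, ← map_mul, mul_inv_cancel₀ hα]
  rw [this]
  exact mul_mem (diagonal_mem_closure hα) (upperShear_mem_closure (by rw [map_mul, invert_C, hb]))

theorem mem_closure_of_mul_sub_mul_eq_one {a b c d : LaurentPolynomial (ZMod p)}
    (ha : invert a = a) (hb : invert b = b) (hc : invert c = c) (hd : invert d = d)
    (hdet : a * d - b * c = 1) : !![a, b; c, d] ∈ Submonoid.closure (scaGenerators p) := by
  induction hN : c.absDegree using Nat.strong_induction_on generalizing a b c d with
  | _ N ih =>
  by_cases hc0 : c = 0
  · subst hc0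
    exact upperTriangular_mem_closure ha hb hd (by simpa using hdet)
  obtain ⟨q, r, hq, hr, rfl, hrc⟩ := exists_invariant_mul_add hc hc0 ha
  have hstep : !![q * c + r, b; c, d] = !![1, q; 0, 1] * Fou (-1) * !![-c, -d; r, b - q * d] := by
    simp [Fou]
  have hreduced : !![-c, -d; r, b - q * d] ∈ Submonoid.closure (scaGenerators p) := by
    have hc' : invert (-c) = -c := by rw [map_neg, hc]
    have hd' : invert (-d) = -d := by rw [map_neg, hd]
    have hbd : invert (b - q * d) = b - q * d := by rw [map_sub, map_mul, hb, hq, hd]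
    rcases hrc with rfl | hlt
    · exact upperTriangular_mem_closure hc' hd' hbd (by linear_combination hdet)
    · exact ih _ (hN ▸ hlt) hc' hd' hr hbd (by linear_combination hdet) rfl
  rw [hstep]
  exact mul_mem (mul_mem (upperShear_mem_closure hq) (Fou_mem_closure (neg_ne_zero.2 one_ne_zero)))
    hreduced

end Generators

lemma invert_apply_eq_of_sig_app {p : ℕ} {t : Matrix (Fin 2) (Fin 2) (LaurentPolynomial (ZMod p))}
    (hpres : ∀ ξ η, sig (app t ξ) (app t η) = sig ξ η) (hdet : t.det = 1) (i j : Fin 2) :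
    invert (t i j) = t i j := by
  have E1 := hpres (1, 0) (1, 0)
  have E2 := hpres (1, 0) (0, 1)
  have E3 := hpres (0, 1) (1, 0)
  have E4 := hpres (0, 1) (0, 1)
  simp only [sig, app, mul_one, mul_zero, add_zero, zero_add, map_one, map_zero, sub_zero,
    zero_sub] at E1 E2 E3 E4
  rw [Matrix.det_fin_two] at hdet
  match i, j with
  | 0, 0 => linear_combination -invert (t 0 0) * hdet + t 0 0 * E2 - t 0 1 * E1
  | 0, 1 => linear_combination -invert (t 0 1) * hdet + t 0 0 * E4 - t 0 1 * E3
  | 1, 0 => linear_combination -invert (t 1 0) * hdet + t 1 0 * E2 - t 1 1 * E1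
  | 1, 1 => linear_combination -invert (t 1 1) * hdet + t 1 0 * E4 - t 1 1 * E3

/-- Every centered symplectic cellular automaton (a 2×2 matrix over
`R = F_p[u,u⁻¹]` preserving `σ̂` with determinant `1`) is a finite product of
shear matrices `G(f)` with `f` reflection invariant and local Fourier matrices
`F(c)` with `c ≠ 0`. -/
theorem centered_sca_generated (p : ℕ) [Fact p.Prime]
    (t : Matrix (Fin 2) (Fin 2) (LaurentPolynomial (ZMod p)))
    (hpres : ∀ ξ η : LaurentPolynomial (ZMod p) × LaurentPolynomial (ZMod p),
        sig (app t ξ) (app t η) = sig ξ η)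
    (hdet : t.det = 1) :
    t ∈ Submonoid.closure
      ({m | ∃ f : LaurentPolynomial (ZMod p), invert f = f ∧ m = G f} ∪
       {m | ∃ c : ZMod p, c ≠ 0 ∧ m = Fou c}) := by
  have hinv := invert_apply_eq_of_sig_app hpres hdet
  rw [Matrix.eta_fin_two t]
  exact mem_closure_of_mul_sub_mul_eq_one (hinv 0 0) (hinv 0 1) (hinv 1 0) (hinv 1 1)
    (by rwa [← Matrix.det_fin_two])
end
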